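/- Let e = e₁, e₂, … be any infinite sequence of closed β-normal λ-terms, and define the numeral system c by c₀ = I and cₙ = <c_{n-1}, eₙ> for n ≥ 1. If S is a closed λ-term such that (S cₙ) ≃β c_{n+1} for all n ∈ ℕ (a Successor for c), then the closed λ-term S' = λn.(S n F) is a generator for e, i.e. (S' I) ≃β e₁ and (S' <e₁,…,eₙ>) ≃β e_{n+1} for all n ≥ 1. Consequently, if e has no generator then c has no Successor. -/

import Mathlib

/-!
Since `c (n+1) = <c n, e n>`, applying a Successor `S` to `c n` and projecting the result onto
its second component with `F` yields `e n`; and the tuples `<e₁,…,eₙ>` are literally the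
numerals `c n`, so `λn.(S n F)` generates `e`.
-/

/-- Untyped λ-terms in de Bruijn notation. -/
inductive Lam : Type
  | var : ℕ → Lam
  | app : Lam → Lam → Lam
  | lam : Lam → Lam
  deriving DecidableEq

namespace Lam

/-- Shift by one the free variables with index ≥ `d`. -/
def lift (d : ℕ) : Lam → Lam
  | var n => if n < d then var n else var (n + 1)
  | app M N => app (lift d M) (lift d N)
  | lam M => lam (lift (d + 1) M)

/-- Capture-avoiding substitution of `N` for the free variable of index `n`. -/
def subst : Lam → ℕ → Lam → Lam
  | var m, n, N => if m = n then N else if n < m then var (m - 1) else var m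
  | app M₁ M₂, n, N => app (subst M₁ n N) (subst M₂ n N)
  | lam M, n, N => lam (subst M (n + 1) (lift 0 N))

/-- One-step β-reduction (contraction of a β-redex anywhere in the term). -/
inductive Step : Lam → Lam → Prop
  | beta (M N : Lam) : Step (app (lam M) N) (subst M 0 N)
  | appL {M M' : Lam} (N : Lam) : Step M M' → Step (app M N) (app M' N)
  | appR (M : Lam) {N N' : Lam} : Step N N' → Step (app M N) (app M N')
  | lam {M M' : Lam} : Step M M' → Step (Lam.lam M) (Lam.lam M')

/-- β-equivalence: the equivalence relation generated by one-step β-reduction. -/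
def BetaEq : Lam → Lam → Prop := Relation.EqvGen Step

/-- The variable of index `n` occurs free in the term. -/
def HasFree : Lam → ℕ → Prop
  | var m, n => m = n
  | app M N, n => HasFree M n ∨ HasFree N n
  | lam M, n => HasFree M (n + 1)

/-- A term is closed if it has no free variables. -/
def Closed (M : Lam) : Prop := ∀ n, ¬ HasFree M n

/-- A term is β-normal: it contains no β-redex. -/
def IsBetaNormal : Lam → Prop
  | app (lam _) _ => False
  | app M N => IsBetaNormal M ∧ IsBetaNormal N
  | lam M => IsBetaNormal M
  | var _ => True

/-- A term is βη-normal: it contains no β-redex and no η-redex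
`λx.(M x)` with `x` not free in `M`. -/
def IsBetaEtaNormal : Lam → Prop
  | app (lam _) _ => False
  | app M N => IsBetaEtaNormal M ∧ IsBetaEtaNormal N
  | lam (app M (var 0)) => HasFree M 0 ∧ IsBetaEtaNormal (app M (var 0))
  | lam M => IsBetaEtaNormal M
  | var _ => True

/-- `I = λx.x`. -/
def I : Lam := lam (var 0)

/-- `T = λxλy.x`. -/
def T : Lam := lam (lam (var 1))

/-- `F = λxλy.y`. -/
def F : Lam := lam (lam (var 0))

/-- The pair `<M,N> = λx.(x M N)` (the binder shifts the free variables of `M,N`). -/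
def pair (M N : Lam) : Lam := lam (app (app (var 0) (lift 0 M)) (lift 0 N))

end Lam

/-- For a sequence `U` (where `U i` codes the mathematical `U_{i+1}`),
`tuple U n` is the term `<U₁,…,Uₙ> = <…<<I,U₁>,U₂>,…,Uₙ>` (and `tuple U 0 = I`). -/
def Lam.tuple (U : ℕ → Lam) : ℕ → Lam
  | 0 => Lam.I
  | n + 1 => Lam.pair (Lam.tuple U n) (U n)

/-- The numeral system `c` built on a sequence `e` (where `e i` codes the mathematical
`e_{i+1}`) : `c₀ = I` and `cₙ = <c_{n-1}, eₙ>` for `n ≥ 1`. -/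
def Lam.sysC (e : ℕ → Lam) : ℕ → Lam
  | 0 => Lam.I
  | n + 1 => Lam.pair (Lam.sysC e n) (e n)

namespace Lam

open Relation

theorem Step.betaEq {M N : Lam} (h : Step M N) : BetaEq M N :=
  EqvGen.rel _ _ h

theorem BetaEq.trans {M N P : Lam} (h₁ : BetaEq M N) (h₂ : BetaEq N P) : BetaEq M P :=
  EqvGen.trans _ _ _ h₁ h₂

theorem BetaEq.app_left (N : Lam) {M M' : Lam} (h : BetaEq M M') :
    BetaEq (app M N) (app M' N) := by
  induction h with
  | rel _ _ h => exact (Step.appL N h).betaEq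
  | refl _ => exact EqvGen.refl _
  | symm _ _ _ ih => exact EqvGen.symm _ _ ih
  | trans _ _ _ _ _ ih₁ ih₂ => exact ih₁.trans ih₂

theorem subst_lift (M : Lam) (d : ℕ) (N : Lam) : subst (lift d M) d N = M := by
  induction M generalizing d N with
  | var m =>
    by_cases h : m < d
    · simp only [lift, if_pos h, subst, if_neg (by omega : ¬ m = d),
        if_neg (by omega : ¬ d < m)]
    · simp only [lift, if_neg h, subst, if_neg (by omega : ¬ m + 1 = d),
        if_pos (by omega : d < m + 1), Nat.add_sub_cancel]
  | app A B ihA ihB => simp only [lift, subst, ihA, ihB]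
  | lam A ih => simp only [lift, subst, ih]

theorem hasFree_lift (M : Lam) (d n : ℕ) :
    HasFree (lift d M) n ↔ (n < d ∧ HasFree M n) ∨ (d < n ∧ HasFree M (n - 1)) := by
  induction M generalizing d n with
  | var m => by_cases h : m < d <;> simp [lift, h, HasFree] <;> omega
  | app A B ihA ihB =>
    simp only [lift, HasFree, ihA, ihB]
    tauto
  | lam A ih =>
    simp only [lift, HasFree, ih, Nat.add_lt_add_iff_right, Nat.add_sub_cancel]
    rcases Nat.eq_zero_or_pos n with rfl | hn
    · simp
    · rw [Nat.sub_add_cancel hn]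

theorem Closed.not_hasFree_lift {M : Lam} (hM : Closed M) (d n : ℕ) :
    ¬ HasFree (lift d M) n := by
  rw [hasFree_lift]
  rintro (⟨_, h⟩ | ⟨_, h⟩) <;> exact hM _ h

theorem Step.pair_app (M N P : Lam) : Step (app (pair M N) P) (app (app P M) N) := by
  simpa only [pair, subst, subst_lift, if_true] using
    Step.beta (app (app (var 0) (lift 0 M)) (lift 0 N)) P

theorem betaEq_F_app_app (M N : Lam) : BetaEq (app (app F M) N) N := by
  have hF : Step (app F M) I := by simpa [F, I, subst, lift] using Step.beta (lam (var 0)) M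
  have hI : Step (app I N) N := by simpa [I, subst] using Step.beta (var 0) N
  exact (Step.appL N hF).betaEq.trans hI.betaEq

theorem betaEq_pair_app_F (M N : Lam) : BetaEq (app (pair M N) F) N :=
  (Step.pair_app M N F).betaEq.trans (betaEq_F_app_app M N)

/-- `S' = λn.(S n F)`. -/
def genOfSucc (S : Lam) : Lam := lam (app (app (lift 0 S) (var 0)) F)

theorem Closed.genOfSucc {S : Lam} (hS : Closed S) : Closed (genOfSucc S) := by
  intro n h
  simp only [Lam.genOfSucc, HasFree, F] at h
  rcases h with (h | h) | h
  · exact hS.not_hasFree_lift 0 _ h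
  · omega
  · omega

theorem betaEq_genOfSucc_app (S M : Lam) : BetaEq (app (genOfSucc S) M) (app (app S M) F) := by
  simpa [genOfSucc, subst, subst_lift, F] using
    (Step.beta (app (app (lift 0 S) (var 0)) F) M).betaEq

/-- Since `tuple U 0 = I`, the equations `A I ≃β U₁` and `A <U₁,…,Uₙ> ≃β U_{n+1}` merge
into one. -/
def IsGenerator (U : ℕ → Lam) (A : Lam) : Prop :=
  Closed A ∧ ∀ n, BetaEq (app A (tuple U n)) (U n)

def IsSuccessor (c : ℕ → Lam) (S : Lam) : Prop :=
  Closed S ∧ ∀ n, BetaEq (app S (c n)) (c (n + 1))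

theorem tuple_eq_sysC (e : ℕ → Lam) : tuple e = sysC e := by
  funext n
  induction n with
  | zero => rfl
  | succ n ih => simp only [tuple, sysC, ih]

theorem IsSuccessor.isGenerator_genOfSucc {e : ℕ → Lam} {S : Lam}
    (hS : IsSuccessor (sysC e) S) : IsGenerator e (genOfSucc S) := by
  refine ⟨hS.1.genOfSucc, fun n => ?_⟩
  rw [tuple_eq_sysC]
  exact (betaEq_genOfSucc_app S _).trans <| (BetaEq.app_left F (hS.2 n)).trans <|
    betaEq_pair_app_F _ _

end Lam

theorem statement12_general (e : ℕ → Lam) :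
    (∀ S : Lam, Lam.Closed S →
      (∀ n, Lam.BetaEq (Lam.app S (Lam.sysC e n)) (Lam.sysC e (n + 1))) →
      Lam.Closed (Lam.lam (Lam.app (Lam.app (Lam.lift 0 S) (Lam.var 0)) Lam.F)) ∧
      Lam.BetaEq (Lam.app (Lam.lam (Lam.app (Lam.app (Lam.lift 0 S) (Lam.var 0)) Lam.F))
        Lam.I) (e 0) ∧
      ∀ n, 1 ≤ n →
        Lam.BetaEq (Lam.app (Lam.lam (Lam.app (Lam.app (Lam.lift 0 S) (Lam.var 0)) Lam.F))
          (Lam.tuple e n)) (e n)) ∧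
    ((¬ ∃ A, Lam.Closed A ∧ Lam.BetaEq (Lam.app A Lam.I) (e 0) ∧
          ∀ n, 1 ≤ n → Lam.BetaEq (Lam.app A (Lam.tuple e n)) (e n)) →
      ¬ ∃ S, Lam.Closed S ∧ ∀ n, Lam.BetaEq (Lam.app S (Lam.sysC e n)) (Lam.sysC e (n + 1))) := by
  refine ⟨fun S hSc hS => ?_, fun hNoGen ⟨S, hS⟩ => hNoGen ?_⟩
  · obtain ⟨hc, hgen⟩ := Lam.IsSuccessor.isGenerator_genOfSucc ⟨hSc, hS⟩
    exact ⟨hc, hgen 0, fun n _ => hgen n⟩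
  · obtain ⟨hc, hgen⟩ := Lam.IsSuccessor.isGenerator_genOfSucc hS
    exact ⟨_, hc, hgen 0, fun n _ => hgen n⟩

/-- For any infinite sequence `e` of closed β-normal λ-terms and the numeral system `c`
(`c₀ = I`, `cₙ = <c_{n-1}, eₙ>`) : if `S` is a closed Successor for `c` then
`S' = λn.(S n F)` is a generator for `e`; consequently, if `e` has no generator then
`c` has no Successor. (Here `e i` codes the mathematical `e_{i+1}`.) -/
theorem statement12 (e : ℕ → Lam)
    (he : ∀ i, Lam.Closed (e i) ∧ Lam.IsBetaNormal (e i)) :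
    (∀ S : Lam, Lam.Closed S →
      (∀ n, Lam.BetaEq (Lam.app S (Lam.sysC e n)) (Lam.sysC e (n + 1))) →
      Lam.Closed (Lam.lam (Lam.app (Lam.app (Lam.lift 0 S) (Lam.var 0)) Lam.F)) ∧
      Lam.BetaEq (Lam.app (Lam.lam (Lam.app (Lam.app (Lam.lift 0 S) (Lam.var 0)) Lam.F))
        Lam.I) (e 0) ∧
      ∀ n, 1 ≤ n →
        Lam.BetaEq (Lam.app (Lam.lam (Lam.app (Lam.app (Lam.lift 0 S) (Lam.var 0)) Lam.F))
          (Lam.tuple e n)) (e n)) ∧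
    ((¬ ∃ A, Lam.Closed A ∧ Lam.BetaEq (Lam.app A Lam.I) (e 0) ∧
          ∀ n, 1 ≤ n → Lam.BetaEq (Lam.app A (Lam.tuple e n)) (e n)) →
      ¬ ∃ S, Lam.Closed S ∧ ∀ n, Lam.BetaEq (Lam.app S (Lam.sysC e n)) (Lam.sysC e (n + 1))) :=
  statement12_general e
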